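/- (Lemma 3.1(ii), d = 2.) Let Ω ⊆ ℝ² be a bounded open set with 0 ∉ closure(Ω), r > 0, T the inversion in the sphere of radius r centered at the origin, σ the 1-dimensional Hausdorff measure restricted to ∂Ω, and σ* the 1-dimensional Hausdorff measure restricted to ∂Ω* := T(∂Ω). Let ν : ℝ² → ℝ² be any map, and define ν*(T x) := R_x ν(x) on ∂Ω*, where R_x = I − 2(x/|x|)(x/|x|)ᵗ. Let φ : ℝ² → ℝ be bounded Borel measurable with σ(∂Ω) < ∞ and define φ*(T y) := φ(y)|y|²/r². Then for every x ∈ ∂Ω such that y ↦ ⟨ν(x), ∇Γ(x−y)⟩φ(y) is σ-integrable, ∫_{∂Ω*} ⟨ν*(Tx), ∇Γ(Tx − z)⟩ φ*(z) dσ*(z) = (|x|²/r²) ∫_{∂Ω} ⟨ν(x), ∇Γ(x − y)⟩ φ(y) dσ(y) − (∫_{∂Ω} φ dσ) · ⟨x, ν(x)⟩/(2π r²), where ∇Γ(z) = z/(2π|z|²). -/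

import Mathlib

open MeasureTheory Filter Topology Set EuclideanGeometry
open scoped Real RealInnerProductSpace ENNReal

/-! The inversion `T` stretches lengths near `y` by the factor `r²/|y|²`: on a shell
`a ≤ |y| < ta` it is Lipschitz with constant `r²/a²`, and its inverse is Lipschitz on the image
with constant `t²a²/r²`. Cutting `∂Ω` into such shells and letting `t → 1` gives the change of
variables `dσ*(Ty) = (r²/|y|²) dσ(y)`, which turns `φ*(Ty)` back into `φ(y)`. What is left is the
pointwise identity `⟨R_x v, ∇Γ(Tx - Ty)⟩ = (|x|²/r²) ⟨v, ∇Γ(x - y)⟩ - ⟨x, v⟩/(2πr²)` for `y ≠ x`. -/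

section Shells

variable {α : Type*} [MeasurableSpace α] {g : α → ℝ} {A : Set α} {t : ℝ}

theorem MeasureTheory.measure_eq_tsum_measure_inter_preimage_Ico_zpow (μ : Measure α)
    (hg : Measurable g) (hA : MeasurableSet A) (hpos : ∀ y ∈ A, 0 < g y) (ht : 1 < t) :
    μ A = ∑' n : ℤ, μ (A ∩ g ⁻¹' Ico (t ^ n) (t ^ (n + 1))) := by
  rw [← measure_iUnion _ fun n => hA.inter (hg measurableSet_Ico)]
  · congr 1
    ext y
    simp only [mem_iUnion, mem_inter_iff, mem_preimage]
    exact ⟨fun hy => (exists_mem_Ico_zpow (hpos y hy) ht).imp fun _ hn => ⟨hy, hn⟩,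
      fun ⟨_, hy, _⟩ => hy⟩
  · exact fun m n hmn =>
      (((zpow_right_mono₀ ht.le).pairwise_disjoint_on_Ico_succ hmn).preimage g).mono
        inter_subset_right inter_subset_right

theorem MeasureTheory.measure_le_of_forall_shell {μ ν : Measure α} (hg : Measurable g)
    (hA : MeasurableSet A) (hpos : ∀ y ∈ A, 0 < g y) {C : ℝ → ℝ≥0∞}
    (hC : Tendsto C (𝓝[>] 1) (𝓝 1))
    (h : ∀ t > 1, ∀ a > 0,
      μ (A ∩ g ⁻¹' Ico a (t * a)) ≤ C t * ν (A ∩ g ⁻¹' Ico a (t * a))) :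
    μ A ≤ ν A := by
  have hle : ∀ t > 1, μ A ≤ C t * ν A := fun t ht => by
    rw [measure_eq_tsum_measure_inter_preimage_Ico_zpow μ hg hA hpos ht,
      measure_eq_tsum_measure_inter_preimage_Ico_zpow ν hg hA hpos ht, ← ENNReal.tsum_mul_left]
    refine ENNReal.tsum_le_tsum fun n => ?_
    simpa only [zpow_add_one₀ (zero_lt_one.trans ht).ne', mul_comm _ t] using
      h t ht _ (zpow_pos (zero_lt_one.trans ht) n)
  simpa using ge_of_tendsto (ENNReal.Tendsto.mul_const hC (.inl one_ne_zero))
    (eventually_nhdsWithin_of_forall hle)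

end Shells

namespace EuclideanGeometry

variable {V P : Type*} [NormedAddCommGroup V] [InnerProductSpace ℝ V] [MetricSpace P]
  [NormedAddTorsor V P] {c : P} {R a : ℝ} {s : Set P}

theorem lipschitzOnWith_inversion (ha : 0 < a) (hs : ∀ y ∈ s, a ≤ dist y c) :
    LipschitzOnWith (R ^ 2 / a ^ 2).toNNReal (inversion c R) s := by
  refine LipschitzOnWith.of_dist_le_mul fun u hu v hv => ?_
  have hau := hs u hu
  have hav := hs v hv
  rw [dist_inversion_inversion (dist_pos.mp (ha.trans_le hau)) (dist_pos.mp (ha.trans_le hav)),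
    Real.coe_toNNReal _ (by positivity)]
  gcongr
  nlinarith

theorem inversion_zero_apply (r : ℝ) (y : V) : inversion 0 r y = (r ^ 2 / ‖y‖ ^ 2) • y := by
  simp [inversion, div_pow]

theorem inner_reflection_kernel_inversion {r : ℝ} {x y : V} (hx : x ≠ 0) (hy : y ≠ 0)
    (hxy : x ≠ y) (v : V) :
    ⟪v - (2 * ⟪x, v⟫ / ‖x‖ ^ 2) • x,
        (2 * π * ‖inversion 0 r x - inversion 0 r y‖ ^ 2)⁻¹ •
          (inversion 0 r x - inversion 0 r y)⟫ =
      ‖x‖ ^ 2 / r ^ 2 * ⟪v, (2 * π * ‖x - y‖ ^ 2)⁻¹ • (x - y)⟫ - ⟪x, v⟫ / (2 * π * r ^ 2) := by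
  have hnorm : ‖inversion 0 r x - inversion 0 r y‖ = r ^ 2 / (‖x‖ * ‖y‖) * ‖x - y‖ := by
    simpa only [dist_eq_norm, sub_zero] using dist_inversion_inversion hx hy r
  have hx' : 0 < ‖x‖ := norm_pos_iff.mpr hx
  have hy' : 0 < ‖y‖ := norm_pos_iff.mpr hy
  have hxy' : ‖x‖ ^ 2 - 2 * ⟪x, y⟫ + ‖y‖ ^ 2 ≠ 0 := by
    rw [← norm_sub_sq_real]
    exact pow_ne_zero 2 (norm_ne_zero_iff.mpr (sub_ne_zero.mpr hxy))
  rw [hnorm, inversion_zero_apply, inversion_zero_apply]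
  simp only [inner_sub_left, inner_sub_right, real_inner_smul_left, real_inner_smul_right,
    real_inner_self_eq_norm_sq, real_inner_comm v x]
  rw [mul_pow, norm_sub_sq_real x y]
  field_simp
  ring

variable [MeasurableSpace P] [BorelSpace P]

theorem measurable_inversion : Measurable (inversion c R) :=
  measurable_of_continuousOn_compl_singleton c <|
    continuousOn_const.inversion continuousOn_const continuousOn_id fun _ => id

theorem hausdorffMeasure_inversion_image_le {d : ℝ} (hd : 0 ≤ d) (ha : 0 < a)
    (hs : ∀ y ∈ s, a ≤ dist y c) :
    μH[d] (inversion c R '' s) ≤ ENNReal.ofReal (R ^ 2 / a ^ 2) ^ d * μH[d] s :=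
  (lipschitzOnWith_inversion ha hs).hausdorffMeasure_image_le hd

variable {t d : ℝ}

theorem hausdorffMeasure_inversion_image_le_lintegral (hd : 0 ≤ d) (ht : 0 < t) (ha : 0 < a)
    (hs : ∀ y ∈ s, a ≤ dist y c ∧ dist y c < t * a) :
    μH[d] (inversion c R '' s) ≤
      ENNReal.ofReal (t ^ 2) ^ d * ∫⁻ y in s, ENNReal.ofReal (R ^ 2 / dist y c ^ 2) ^ d ∂μH[d] :=
  calc μH[d] (inversion c R '' s)
      ≤ ENNReal.ofReal (R ^ 2 / a ^ 2) ^ d * μH[d] s :=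
        hausdorffMeasure_inversion_image_le hd ha fun y hy => (hs y hy).1
    _ = ENNReal.ofReal (t ^ 2) ^ d *
          ∫⁻ _ in s, ENNReal.ofReal (R ^ 2 / (t * a) ^ 2) ^ d ∂μH[d] := by
        rw [setLIntegral_const, ← mul_assoc, ← ENNReal.mul_rpow_of_nonneg _ _ hd,
          ← ENNReal.ofReal_mul (by positivity)]
        congr 3
        field_simp
    _ ≤ _ := by
        gcongr ENNReal.ofReal (t ^ 2) ^ d * ?_
        refine setLIntegral_mono (by fun_prop) fun y hy => ?_
        have := ha.trans_le (hs y hy).1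
        gcongr
        exact (hs y hy).2.le

theorem lintegral_le_hausdorffMeasure_inversion_image (hR : R ≠ 0) (hd : 0 ≤ d) (ht : 0 < t)
    (ha : 0 < a) (hs : ∀ y ∈ s, a ≤ dist y c ∧ dist y c < t * a) :
    ∫⁻ y in s, ENNReal.ofReal (R ^ 2 / dist y c ^ 2) ^ d ∂μH[d] ≤
      ENNReal.ofReal (t ^ 2) ^ d * μH[d] (inversion c R '' s) := by
  have himage : ∀ z ∈ inversion c R '' s, R ^ 2 / (t * a) ≤ dist z c := by
    rintro _ ⟨y, hy, rfl⟩
    rw [dist_inversion_center]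
    gcongr
    · exact ha.trans_le (hs y hy).1
    · exact (hs y hy).2.le
  calc ∫⁻ y in s, ENNReal.ofReal (R ^ 2 / dist y c ^ 2) ^ d ∂μH[d]
      ≤ ∫⁻ _ in s, ENNReal.ofReal (R ^ 2 / a ^ 2) ^ d ∂μH[d] := by
        refine setLIntegral_mono measurable_const fun y hy => ?_
        gcongr
        exact (hs y hy).1
    _ = ENNReal.ofReal (R ^ 2 / a ^ 2) ^ d * μH[d] (inversion c R '' (inversion c R '' s)) := by
        rw [setLIntegral_const, (inversion_involutive c hR).leftInverse.image_image]
    _ ≤ ENNReal.ofReal (R ^ 2 / a ^ 2) ^ d *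
          (ENNReal.ofReal (R ^ 2 / (R ^ 2 / (t * a)) ^ 2) ^ d * μH[d] (inversion c R '' s)) := by
        gcongr
        exact hausdorffMeasure_inversion_image_le hd (by positivity) himage
    _ = ENNReal.ofReal (t ^ 2) ^ d * μH[d] (inversion c R '' s) := by
        rw [← mul_assoc, ← ENNReal.mul_rpow_of_nonneg _ _ hd, ← ENNReal.ofReal_mul (by positivity)]
        congr 3
        field_simp

theorem hausdorffMeasure_inversion_image (hR : R ≠ 0) (hd : 0 ≤ d) (hs : MeasurableSet s)
    (hc : c ∉ s) :
    μH[d] (inversion c R '' s) = ∫⁻ y in s, ENNReal.ofReal (R ^ 2 / dist y c ^ 2) ^ d ∂μH[d] := by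
  set μ := (μH[d] : Measure P).map (inversion c R)
  set ν := (μH[d] : Measure P).withDensity fun y => ENNReal.ofReal (R ^ 2 / dist y c ^ 2) ^ d
  have hμ : ∀ {B}, MeasurableSet B → μ B = μH[d] (inversion c R '' B) := fun hB => by
    rw [Measure.map_apply measurable_inversion hB,
      image_eq_preimage_of_inverse (inversion_involutive c hR) (inversion_involutive c hR)]
  have hν : ∀ {B}, MeasurableSet B →
      ν B = ∫⁻ y in B, ENNReal.ofReal (R ^ 2 / dist y c ^ 2) ^ d ∂μH[d] :=
    fun hB => withDensity_apply _ hB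
  have hg : Measurable fun y => dist y c := (continuous_id.dist continuous_const).measurable
  have hpos : ∀ y ∈ s, 0 < dist y c := fun y hy => dist_pos.mpr (ne_of_mem_of_not_mem hy hc)
  have hC : Tendsto (fun t : ℝ => ENNReal.ofReal (t ^ 2) ^ d) (𝓝[>] 1) (𝓝 1) := by
    refine tendsto_nhdsWithin_of_tendsto_nhds ?_
    simpa [Function.comp_def] using ((ENNReal.continuous_rpow_const.comp
      (ENNReal.continuous_ofReal.comp (continuous_pow 2))).tendsto 1)
  have hshell : ∀ {t a}, MeasurableSet (s ∩ (fun y => dist y c) ⁻¹' Ico a (t * a)) :=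
    hs.inter (hg measurableSet_Ico)
  apply le_antisymm
  · rw [← hμ hs, ← hν hs]
    refine measure_le_of_forall_shell hg hs hpos hC fun t ht a ha => ?_
    rw [hμ hshell, hν hshell]
    exact hausdorffMeasure_inversion_image_le_lintegral hd (by positivity) ha fun y hy => hy.2
  · rw [← hμ hs, ← hν hs]
    refine measure_le_of_forall_shell hg hs hpos hC fun t ht a ha => ?_
    rw [hμ hshell, hν hshell]
    exact lintegral_le_hausdorffMeasure_inversion_image hR hd (by positivity) ha fun y hy => hy.2

theorem measurableEmbedding_inversion (hR : R ≠ 0) : MeasurableEmbedding (inversion c R) :=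
  (MeasurableEquiv.ofInvolutive _ (inversion_involutive c hR)
    measurable_inversion).measurableEmbedding

theorem restrict_inversion_image (hR : R ≠ 0) (hd : 0 ≤ d) (hs : MeasurableSet s) (hc : c ∉ s) :
    μH[d].restrict (inversion c R '' s) =
      ((μH[d].restrict s).withDensity fun y => ENNReal.ofReal (R ^ 2 / dist y c ^ 2) ^ d).map
        (inversion c R) := by
  ext B hB
  have hB' : MeasurableSet (inversion c R ⁻¹' B) := measurable_inversion hB
  rw [Measure.restrict_apply hB, Measure.map_apply measurable_inversion hB,
    withDensity_apply _ hB', Measure.restrict_restrict hB',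
    ← hausdorffMeasure_inversion_image hR hd (hB'.inter hs) fun h => hc h.2,
    inter_comm (inversion c R ⁻¹' B), image_inter_preimage, inter_comm]

theorem setIntegral_inversion_image {G : Type*} [NormedAddCommGroup G] [NormedSpace ℝ G]
    (hR : R ≠ 0) (hd : 0 ≤ d) (hs : MeasurableSet s) (hc : c ∉ s) (f : P → G) :
    ∫ z in inversion c R '' s, f z ∂μH[d] =
      ∫ y in s, (R ^ 2 / dist y c ^ 2) ^ d • f (inversion c R y) ∂μH[d] := by
  rw [restrict_inversion_image hR hd hs hc, (measurableEmbedding_inversion hR).integral_map,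
    integral_withDensity_eq_integral_toReal_smul (by fun_prop)
      (ae_of_all _ fun _ => ENNReal.rpow_lt_top_of_nonneg hd ENNReal.ofReal_ne_top)]
  simp only [← ENNReal.toReal_rpow, ENNReal.toReal_ofReal, sq_nonneg, div_nonneg]

end EuclideanGeometry

theorem np_inversion_exterior_dim2_general
    (r : ℝ) (hr : 0 < r) (Ω : Set (EuclideanSpace ℝ (Fin 2)))
    (h0 : (0 : EuclideanSpace ℝ (Fin 2)) ∉ closure Ω)
    (T : EuclideanSpace ℝ (Fin 2) → EuclideanSpace ℝ (Fin 2))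
    (hT : ∀ x : EuclideanSpace ℝ (Fin 2), x ≠ 0 → T x = (r ^ 2 / ‖x‖ ^ 2) • x)
    (σ σs : Measure (EuclideanSpace ℝ (Fin 2)))
    (hσ : σ = μH[1].restrict (frontier Ω))
    (hσs : σs = μH[1].restrict (T '' frontier Ω))
    (hfin : σ (frontier Ω) < ⊤)
    (R : EuclideanSpace ℝ (Fin 2) → EuclideanSpace ℝ (Fin 2) → EuclideanSpace ℝ (Fin 2))
    (hR : ∀ x v : EuclideanSpace ℝ (Fin 2), x ≠ 0 →
      R x v = v - (2 * ⟪x, v⟫ / ‖x‖ ^ 2) • x)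
    (ν νs : EuclideanSpace ℝ (Fin 2) → EuclideanSpace ℝ (Fin 2))
    (hνs : ∀ x ∈ frontier Ω, νs (T x) = R x (ν x))
    (φ : EuclideanSpace ℝ (Fin 2) → ℝ) (hφmeas : Measurable φ)
    (hφbdd : ∃ C, ∀ y, |φ y| ≤ C)
    (φs : EuclideanSpace ℝ (Fin 2) → ℝ)
    (hφs : ∀ y ∈ frontier Ω, φs (T y) = φ y * ‖y‖ ^ 2 / r ^ 2)
    (x : EuclideanSpace ℝ (Fin 2)) (hxΩ : x ∈ frontier Ω)
    (hint : Integrable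
      (fun y => ⟪ν x, (2 * π * ‖x - y‖ ^ 2)⁻¹ • (x - y)⟫ * φ y) σ) :
    ∫ z, ⟪νs (T x), (2 * π * ‖T x - z‖ ^ 2)⁻¹ • (T x - z)⟫ * φs z ∂σs =
      (‖x‖ ^ 2 / r ^ 2) *
          ∫ y, ⟪ν x, (2 * π * ‖x - y‖ ^ 2)⁻¹ • (x - y)⟫ * φ y ∂σ
        - (∫ y, φ y ∂σ) * (⟪x, ν x⟫ / (2 * π * r ^ 2)) := by
  subst hσ hσs
  have hS : MeasurableSet (frontier Ω) := isClosed_frontier.measurableSet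
  have h0S : (0 : EuclideanSpace ℝ (Fin 2)) ∉ frontier Ω :=
    fun h => h0 (frontier_subset_closure h)
  have hTS : ∀ y ∈ frontier Ω, T y = inversion 0 r y := fun y hy => by
    rw [hT y (ne_of_mem_of_not_mem hy h0S), inversion_zero_apply]
  have hx0 : x ≠ 0 := ne_of_mem_of_not_mem hxΩ h0S
  have : IsFiniteMeasure (μH[1].restrict (frontier Ω)) :=
    ⟨by rwa [Measure.restrict_apply_univ, ← Measure.restrict_apply_self]⟩
  obtain ⟨C, hC⟩ := hφbdd
  have hφint : Integrable φ (μH[1].restrict (frontier Ω)) :=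
    .of_bound hφmeas.aestronglyMeasurable C (ae_of_all _ hC)
  have : NullSingletonClass (μH[1] : Measure (EuclideanSpace ℝ (Fin 2))) :=
    Measure.nullSingletonClass_hausdorff _ one_pos
  rw [image_congr hTS, setIntegral_inversion_image hr.ne' zero_le_one hS h0S, hνs x hxΩ,
    hR x _ hx0, hTS x hxΩ, ← integral_mul_const, ← integral_const_mul,
    ← integral_sub (hint.const_mul _) (hφint.mul_const _)]
  refine setIntegral_congr_ae hS ?_
  filter_upwards [Measure.ae_ne μH[1] x] with y hyx hy
  have hφy := hφs y hy
  rw [hTS y hy] at hφy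
  have hy0 : y ≠ 0 := ne_of_mem_of_not_mem hy h0S
  rw [hφy, inner_reflection_kernel_inversion hx0 hy0 hyx.symm, Real.rpow_one,
    smul_eq_mul, dist_zero_right]
  field_simp

/-- Lemma 3.1(ii), `d = 2`: transformation of the Neumann–Poincaré operator under
inversion in a sphere centered at an exterior point `0 ∉ closure Ω`:
`K*_{∂Ω*}[φ*](Tx) = (|x|²/r²) K*_{∂Ω}[φ](x) − (∫_{∂Ω} φ dσ)(x·ν_x)/(2πr²)`,
with `∇Γ(z) = z/(2π|z|²)`, `φ*(Ty) = φ(y)|y|²/r²`, and `ν*(Tx) = R_x ν(x)`. -/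
theorem np_inversion_exterior_dim2
    (r : ℝ) (hr : 0 < r) (Ω : Set (EuclideanSpace ℝ (Fin 2)))
    (hopen : IsOpen Ω) (hbd : Bornology.IsBounded Ω)
    (h0 : (0 : EuclideanSpace ℝ (Fin 2)) ∉ closure Ω)
    (T : EuclideanSpace ℝ (Fin 2) → EuclideanSpace ℝ (Fin 2))
    (hT : ∀ x : EuclideanSpace ℝ (Fin 2), x ≠ 0 → T x = (r ^ 2 / ‖x‖ ^ 2) • x)
    (σ σs : Measure (EuclideanSpace ℝ (Fin 2)))
    (hσ : σ = μH[1].restrict (frontier Ω))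
    (hσs : σs = μH[1].restrict (T '' frontier Ω))
    (hfin : σ (frontier Ω) < ⊤)
    (R : EuclideanSpace ℝ (Fin 2) → EuclideanSpace ℝ (Fin 2) → EuclideanSpace ℝ (Fin 2))
    (hR : ∀ x v : EuclideanSpace ℝ (Fin 2), x ≠ 0 →
      R x v = v - (2 * ⟪x, v⟫ / ‖x‖ ^ 2) • x)
    (ν νs : EuclideanSpace ℝ (Fin 2) → EuclideanSpace ℝ (Fin 2))
    (hνs : ∀ x ∈ frontier Ω, νs (T x) = R x (ν x))
    (φ : EuclideanSpace ℝ (Fin 2) → ℝ) (hφmeas : Measurable φ)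
    (hφbdd : ∃ C, ∀ y, |φ y| ≤ C)
    (φs : EuclideanSpace ℝ (Fin 2) → ℝ)
    (hφs : ∀ y ∈ frontier Ω, φs (T y) = φ y * ‖y‖ ^ 2 / r ^ 2)
    (x : EuclideanSpace ℝ (Fin 2)) (hxΩ : x ∈ frontier Ω)
    (hint : Integrable
      (fun y => ⟪ν x, (2 * π * ‖x - y‖ ^ 2)⁻¹ • (x - y)⟫ * φ y) σ) :
    ∫ z, ⟪νs (T x), (2 * π * ‖T x - z‖ ^ 2)⁻¹ • (T x - z)⟫ * φs z ∂σs =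
      (‖x‖ ^ 2 / r ^ 2) *
          ∫ y, ⟪ν x, (2 * π * ‖x - y‖ ^ 2)⁻¹ • (x - y)⟫ * φ y ∂σ
        - (∫ y, φ y ∂σ) * (⟪x, ν x⟫ / (2 * π * r ^ 2)) :=
  np_inversion_exterior_dim2_general r hr Ω h0 T hT σ σs hσ hσs hfin R hR ν νs hνs φ hφmeas hφbdd φs
    hφs x hxΩ hint
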